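/- arXiv:physics/0404047 — 5 statements merged into one kernel-verified Lean document; each statement's English description precedes it below -/
import Mathlib

section
/- Let ξ : ℝ³ → ℝ be a Schwartz function (or any function whose Fourier transform satisfies ∫|r ξ̂(r)| dr < ∞), and for R > 0 set ξ_R(x) = ξ(x/R). Then the operator norm of the commutator [ξ_R, |D⁰|] on L²(ℝ³, ℂ⁴) is bounded by (C/R) ∫_{ℝ³} |r ξ̂₁(r)| dr for a constant C independent of R; in particular ‖[ξ_R, |D⁰|]‖ = O(1/R) as R → ∞. -/
/-!
Since `E(p) = √(1 + |p|²)` is 1-Lipschitz, `|E(q) − E(p)| ≤ |p − q|`, so the integrand is dominated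
by `k_R(p − q) |f(p)| |g(q)|` with the convolution kernel `k_R(r) = R² |Rr| |ξ̂(Rr)|`. Substituting
`q = p − r` and applying Cauchy–Schwarz in `p` for each fixed `r` bounds such a form by
`‖k_R‖₁ ‖f‖₂ ‖g‖₂`, and rescaling `r ↦ Rr` gives `‖k_R‖₁ = R⁻¹ ∫ |r| |ξ̂(r)| dr`.
-/

open MeasureTheory Real
open scoped ENNReal

noncomputable section

/-- The relativistic dispersion relation `E(p) = √(1+|p|²)`. -/
def disp (p : EuclideanSpace ℝ (Fin 3)) : ℝ := Real.sqrt (1 + ‖p‖ ^ 2)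

theorem lipschitzWith_one_sqrt_one_add_sq : LipschitzWith 1 (fun t : ℝ => √(1 + t ^ 2)) := by
  refine LipschitzWith.of_dist_le_mul fun s t => ?_
  rw [NNReal.coe_one, one_mul, Real.dist_eq, Real.dist_eq, ← sq_le_sq]
  have hs := Real.sq_sqrt (by positivity : (0 : ℝ) ≤ 1 + s ^ 2)
  have ht := Real.sq_sqrt (by positivity : (0 : ℝ) ≤ 1 + t ^ 2)
  have hst := mul_nonneg (Real.sqrt_nonneg (1 + s ^ 2)) (Real.sqrt_nonneg (1 + t ^ 2))
  -- `(1 + s²)(1 + t²) = (1 + st)² + (s − t)²`, so `√(1 + s²) √(1 + t²) ≥ 1 + st`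
  nlinarith [sq_nonneg (s - t), sq_nonneg (√(1 + s ^ 2) * √(1 + t ^ 2) - (1 + s * t))]

theorem lipschitzWith_one_sqrt_one_add_norm_sq {E : Type*} [SeminormedAddGroup E] :
    LipschitzWith 1 (fun x : E => √(1 + ‖x‖ ^ 2)) := by
  simpa [Function.comp_def] using lipschitzWith_one_sqrt_one_add_sq.comp lipschitzWith_one_norm

theorem lintegral_enorm_mul_le_eLpNorm_mul_eLpNorm {α F F' : Type*} [MeasurableSpace α]
    {μ : Measure α} [NormedAddCommGroup F] [NormedAddCommGroup F'] {p q : ℝ≥0∞}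
    [p.HolderConjugate q] {f : α → F} {g : α → F'}
    (hf : AEStronglyMeasurable f μ) (hg : AEStronglyMeasurable g μ) :
    ∫⁻ x, ‖f x‖ₑ * ‖g x‖ₑ ∂μ ≤ eLpNorm f p μ * eLpNorm g q μ := by
  have := eLpNorm_le_eLpNorm_mul_eLpNorm'_of_norm (p := p) (q := q) (r := 1) hf hg
    (fun u v => ‖u‖ * ‖v‖) 1 (ae_of_all _ fun x => by simp)
  simpa [eLpNorm_one_eq_lintegral_enorm, enorm_mul] using this

theorem lintegral_lintegral_mul_sub_le {G F F' : Type*} [MeasurableSpace G] [AddCommGroup G]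
    [MeasurableAdd₂ G] [MeasurableNeg G] {μ : Measure G} [SFinite μ] [μ.IsAddLeftInvariant]
    [μ.IsNegInvariant] [NormedAddCommGroup F] [NormedAddCommGroup F']
    {k : G → ℝ≥0∞} (hk : AEMeasurable k μ) {f : G → F} {g : G → F'}
    (hf : AEStronglyMeasurable f μ) (hg : AEStronglyMeasurable g μ) :
    ∫⁻ p, ∫⁻ q, k (p - q) * (‖f p‖ₑ * ‖g q‖ₑ) ∂μ ∂μ
      ≤ (∫⁻ r, k r ∂μ) * (eLpNorm f 2 μ * eLpNorm g 2 μ) := by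
  have hg_sub (r : G) : AEStronglyMeasurable (fun p => g (p - r)) μ :=
    hg.comp_measurePreserving (measurePreserving_sub_right μ r)
  have hprod : AEMeasurable (Function.uncurry fun p r => k r * (‖f p‖ₑ * ‖g (p - r)‖ₑ))
      (μ.prod μ) :=
    (hk.comp_quasiMeasurePreserving Measure.quasiMeasurePreserving_snd).mul
      ((hf.enorm.comp_quasiMeasurePreserving Measure.quasiMeasurePreserving_fst).mul
        (hg.enorm.comp_quasiMeasurePreserving (quasiMeasurePreserving_sub_of_right_invariant μ μ)))
  calc ∫⁻ p, ∫⁻ q, k (p - q) * (‖f p‖ₑ * ‖g q‖ₑ) ∂μ ∂μ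
      = ∫⁻ p, ∫⁻ r, k r * (‖f p‖ₑ * ‖g (p - r)‖ₑ) ∂μ ∂μ := by
        refine lintegral_congr fun p => ?_
        rw [← lintegral_sub_left_eq_self _ p]
        simp only [sub_sub_cancel]
    _ = ∫⁻ r, k r * ∫⁻ p, ‖f p‖ₑ * ‖g (p - r)‖ₑ ∂μ ∂μ := by
        rw [lintegral_lintegral_swap hprod]
        exact lintegral_congr fun r => lintegral_const_mul'' _ (hf.enorm.mul (hg_sub r).enorm)
    _ ≤ ∫⁻ r, k r * (eLpNorm f 2 μ * eLpNorm g 2 μ) ∂μ := by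
        gcongr with r
        calc ∫⁻ p, ‖f p‖ₑ * ‖g (p - r)‖ₑ ∂μ
            ≤ eLpNorm f 2 μ * eLpNorm (fun p => g (p - r)) 2 μ :=
              lintegral_enorm_mul_le_eLpNorm_mul_eLpNorm hf (hg_sub r)
          _ = eLpNorm f 2 μ * eLpNorm g 2 μ := by
              congr 1
              exact eLpNorm_comp_measurePreserving hg (measurePreserving_sub_right μ r)
    _ = (∫⁻ r, k r ∂μ) * (eLpNorm f 2 μ * eLpNorm g 2 μ) := lintegral_mul_const'' _ hk

theorem lintegral_comp_smul {E : Type*} [NormedAddCommGroup E] [NormedSpace ℝ E]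
    [MeasurableSpace E] [BorelSpace E] [FiniteDimensional ℝ E] (μ : Measure E)
    [μ.IsAddHaarMeasure] (f : E → ℝ≥0∞) {R : ℝ} (hR : R ≠ 0) :
    ∫⁻ x, f (R • x) ∂μ = ENNReal.ofReal |(R ^ Module.finrank ℝ E)⁻¹| * ∫⁻ x, f x ∂μ := by
  rw [← smul_eq_mul, ← lintegral_smul_measure, ← Measure.map_addHaar_smul μ hR]
  exact (lintegral_map_equiv f (Homeomorph.smulOfNeZero R hR).toMeasurableEquiv).symm

local notation "E3" => EuclideanSpace ℝ (Fin 3)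

theorem lipschitzWith_disp : LipschitzWith 1 disp := lipschitzWith_one_sqrt_one_add_norm_sq

theorem enorm_disp_sub_disp_le (p q : E3) : ‖disp q - disp p‖ₑ ≤ ‖p - q‖ₑ := by
  rw [← edist_eq_enorm_sub, ← edist_eq_enorm_sub, edist_comm p]
  simpa using lipschitzWith_disp.edist_le_mul q p

def commutatorKernel (ξhat : E3 → ℂ) (R : ℝ) (r : E3) : ℝ≥0∞ :=
  ENNReal.ofReal (R ^ 2) * (‖R • r‖ₑ * ‖ξhat (R • r)‖ₑ)

theorem aemeasurable_commutatorKernel {ξhat : E3 → ℂ} (hmeas : AEStronglyMeasurable ξhat volume)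
    {R : ℝ} (hR : R ≠ 0) : AEMeasurable (commutatorKernel ξhat R) :=
  ((measurable_const_smul R).enorm.aemeasurable.mul (hmeas.enorm.comp_quasiMeasurePreserving
    (Measure.quasiMeasurePreserving_smul volume hR))).const_mul _

theorem lintegral_commutatorKernel {ξhat : E3 → ℂ}
    (hmom : Integrable (fun r : E3 => ‖r‖ * ‖ξhat r‖)) {R : ℝ} (hR : 0 < R) :
    ∫⁻ r, commutatorKernel ξhat R r = ENNReal.ofReal (1 / R * ∫ r : E3, ‖r‖ * ‖ξhat r‖) := by
  have hmoment : ∫⁻ r : E3, ‖r‖ₑ * ‖ξhat r‖ₑ = ENNReal.ofReal (∫ r : E3, ‖r‖ * ‖ξhat r‖) := by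
    rw [ofReal_integral_eq_lintegral_ofReal hmom (ae_of_all _ fun r => by positivity)]
    simp only [ENNReal.ofReal_mul (norm_nonneg _), ofReal_norm]
  unfold commutatorKernel
  rw [lintegral_const_mul' _ _ ENNReal.ofReal_ne_top,
    lintegral_comp_smul volume (fun r => ‖r‖ₑ * ‖ξhat r‖ₑ) hR.ne', hmoment,
    finrank_euclideanSpace_fin, ← ENNReal.ofReal_mul (abs_nonneg _),
    ← ENNReal.ofReal_mul (by positivity), abs_of_pos (by positivity)]
  congr 1
  field_simp

theorem enorm_commutator_integrand_le {H : Type*} [NormedAddCommGroup H] [InnerProductSpace ℂ H]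
    (ξhat : E3 → ℂ) {R : ℝ} (hR : 0 < R) (p q : E3) (u v : H) :
    ‖((R ^ 3 : ℝ) : ℂ) * ξhat (R • (p - q)) * inner ℂ u v * ((disp q - disp p : ℝ) : ℂ)‖ₑ
      ≤ commutatorKernel ξhat R (p - q) * (‖u‖ₑ * ‖v‖ₑ) := by
  have henorm_ofReal (x : ℝ) : ‖(x : ℂ)‖ₑ = ‖x‖ₑ := by simp [enorm_eq_nnnorm]
  calc ‖((R ^ 3 : ℝ) : ℂ) * ξhat (R • (p - q)) * inner ℂ u v * ((disp q - disp p : ℝ) : ℂ)‖ₑ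
      = ENNReal.ofReal (R ^ 3) * ‖ξhat (R • (p - q))‖ₑ * ‖inner ℂ u v‖ₑ
          * ‖disp q - disp p‖ₑ := by
        simp only [enorm_mul, henorm_ofReal, Real.enorm_of_nonneg (pow_pos hR 3).le]
    _ ≤ ENNReal.ofReal (R ^ 3) * ‖ξhat (R • (p - q))‖ₑ * (‖u‖ₑ * ‖v‖ₑ) * ‖p - q‖ₑ := by
        gcongr
        · simpa [enorm_eq_nnnorm] using ENNReal.coe_le_coe.2 (nnnorm_inner_le_nnnorm (𝕜 := ℂ) u v)
        · exact enorm_disp_sub_disp_le p q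
    _ = commutatorKernel ξhat R (p - q) * (‖u‖ₑ * ‖v‖ₑ) := by
        rw [commutatorKernel, enorm_smul, Real.enorm_of_nonneg hR.le, pow_succ,
          ENNReal.ofReal_mul (by positivity)]
        ring

/-- The commutator `[ξ_R, |D⁰|]` on `L²(ℝ³, ℂ⁴)`, expressed through its quadratic form in
Fourier variables: if `ξ_R(x) = ξ(x/R)` then `ξ̂_R(r) = R³ ξ̂(Rr)`, and
`⟨f, [ξ_R, |D⁰|] g⟩ = ∫∫ ξ̂_R(p−q) ⟨f̂(p), ĝ(q)⟩ (E(q)−E(p)) dp dq`. -/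
theorem stmt_1 (ξhat : EuclideanSpace ℝ (Fin 3) → ℂ)
    (hmeas : AEStronglyMeasurable ξhat volume)
    (hmom : Integrable (fun r : EuclideanSpace ℝ (Fin 3) => ‖r‖ * ‖ξhat r‖))
    (R : ℝ) (hR : 0 < R)
    (f g : EuclideanSpace ℝ (Fin 3) → EuclideanSpace ℂ (Fin 4))
    (hf : MemLp f 2 volume) (hg : MemLp g 2 volume) :
    ‖∫ p : EuclideanSpace ℝ (Fin 3), ∫ q : EuclideanSpace ℝ (Fin 3),
        ((R ^ 3 : ℝ) : ℂ) * ξhat (R • (p - q)) * (inner ℂ (f p) (g q) : ℂ)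
          * ((disp q - disp p : ℝ) : ℂ)‖
      ≤ (1 / R) * (∫ r : EuclideanSpace ℝ (Fin 3), ‖r‖ * ‖ξhat r‖)
          * (eLpNorm f 2 volume).toReal * (eLpNorm g 2 volume).toReal := by
  have hbound : ‖∫ p : E3, ∫ q : E3, ((R ^ 3 : ℝ) : ℂ) * ξhat (R • (p - q))
        * inner ℂ (f p) (g q) * ((disp q - disp p : ℝ) : ℂ)‖ₑ
      ≤ ENNReal.ofReal (1 / R * ∫ r : E3, ‖r‖ * ‖ξhat r‖)
          * (eLpNorm f 2 volume * eLpNorm g 2 volume) :=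
    calc _ ≤ ∫⁻ p : E3, ∫⁻ q : E3, ‖((R ^ 3 : ℝ) : ℂ) * ξhat (R • (p - q))
            * inner ℂ (f p) (g q) * ((disp q - disp p : ℝ) : ℂ)‖ₑ :=
          (enorm_integral_le_lintegral_enorm _).trans
            (lintegral_mono fun p => enorm_integral_le_lintegral_enorm _)
      _ ≤ ∫⁻ p : E3, ∫⁻ q : E3, commutatorKernel ξhat R (p - q) * (‖f p‖ₑ * ‖g q‖ₑ) :=
          lintegral_mono fun p => lintegral_mono fun q =>
            enorm_commutator_integrand_le ξhat hR p q (f p) (g q)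
      _ ≤ _ := lintegral_lintegral_mul_sub_le (aemeasurable_commutatorKernel hmeas hR.ne') hf.1 hg.1
      _ = _ := by rw [lintegral_commutatorKernel hmom hR]
  have hfinite : ENNReal.ofReal (1 / R * ∫ r : E3, ‖r‖ * ‖ξhat r‖)
      * (eLpNorm f 2 volume * eLpNorm g 2 volume) ≠ ⊤ :=
    ENNReal.mul_ne_top ENNReal.ofReal_ne_top (ENNReal.mul_ne_top hf.2.ne hg.2.ne)
  have hI : 0 ≤ ∫ r : E3, ‖r‖ * ‖ξhat r‖ := integral_nonneg fun r => by positivity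
  have := ENNReal.toReal_mono hfinite hbound
  rwa [ENNReal.toReal_mul, ENNReal.toReal_mul, ENNReal.toReal_ofReal (by positivity), toReal_enorm,
    ← mul_assoc] at this

end
end

section
/- For any self-adjoint Hilbert–Schmidt operator Q on a Hilbert space ℌ and any orthogonal projector P⁰ on ℌ, if 0 ≤ Q + P⁰ ≤ 1 then Q² ≤ Q⁺⁺ − Q⁻⁻, where Q⁺⁺ = (1−P⁰)Q(1−P⁰) and Q⁻⁻ = P⁰QP⁰. -/
open ContinuousLinearMap

/-- `Q` is a Hilbert–Schmidt operator: `∑ ‖Q e i‖²` is finite for some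
(equivalently, any) Hilbert basis. -/
def IsHilbertSchmidt {H : Type*} [NormedAddCommGroup H] [InnerProductSpace ℂ H]
    [CompleteSpace H] (Q : H →L[ℂ] H) : Prop :=
  ∃ (ι : Type) (b : HilbertBasis ι ℂ H), Summable fun i => ‖Q (b i)‖ ^ 2

/-! With `A = Q + P⁰`, the idempotency of `P⁰` gives `Q⁺⁺ - Q⁻⁻ - Q² = A - A²`, and
`A² ≤ A` for every operator `0 ≤ A ≤ 1` by the continuous functional calculus. -/

lemma IsIdempotentElem.one_sub_mul_mul_one_sub_sub_mul_mul_sub_mul_self {R : Type*} [Ring R]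
    {p : R} (hp : IsIdempotentElem p) (q : R) :
    (1 - p) * q * (1 - p) - p * q * p - q * q = (q + p) - (q + p) * (q + p) := by
  simp only [mul_sub, sub_mul, one_mul, mul_one, mul_add, add_mul, hp.eq]
  abel

theorem stmt_2_general {H : Type*} [NormedAddCommGroup H] [InnerProductSpace ℂ H] [CompleteSpace H]
    (Q P0 : H →L[ℂ] H)
    (hP0 : IsIdempotentElem P0)
    (hpos : (Q + P0).IsPositive) (hle : (1 - (Q + P0)).IsPositive) :
    ((1 - P0) * Q * (1 - P0) - P0 * Q * P0 - Q * Q).IsPositive := by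
  rw [hP0.one_sub_mul_mul_one_sub_sub_mul_mul_sub_mul_self, ← nonneg_iff_isPositive, sub_nonneg]
  rw [← nonneg_iff_isPositive] at hpos hle
  simpa only [sq, pow_one] using CStarAlgebra.pow_antitone hpos (sub_nonneg.mp hle) one_le_two

theorem stmt_2 {H : Type*} [NormedAddCommGroup H] [InnerProductSpace ℂ H] [CompleteSpace H]
    (Q P0 : H →L[ℂ] H) (hQsa : IsSelfAdjoint Q) (hQhs : IsHilbertSchmidt Q)
    (hP0 : IsIdempotentElem P0) (hP0sa : IsSelfAdjoint P0)
    (hpos : (Q + P0).IsPositive) (hle : (1 - (Q + P0)).IsPositive) :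
    ((1 - P0) * Q * (1 - P0) - P0 * Q * P0 - Q * Q).IsPositive :=
  stmt_2_general Q P0 hP0 hpos hle
end

section
/- Under the assumptions 0 ≤ Q + P⁰ ≤ 1 with P⁰ an orthogonal projector and Q self-adjoint Hilbert–Schmidt, the operator Q⁺⁺ = (1−P⁰)Q(1−P⁰) is nonnegative and Q⁻⁻ = P⁰QP⁰ is nonpositive. -/
open ContinuousLinearMap

theorem stmt_3 {H : Type*} [NormedAddCommGroup H] [InnerProductSpace ℂ H] [CompleteSpace H]
    (Q P0 : H →L[ℂ] H) (hQsa : IsSelfAdjoint Q) (hQhs : IsHilbertSchmidt Q)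
    (hP0 : IsIdempotentElem P0) (hP0sa : IsSelfAdjoint P0)
    (hpos : (Q + P0).IsPositive) (hle : (1 - (Q + P0)).IsPositive) :
    ((1 - P0) * Q * (1 - P0)).IsPositive ∧ (-(P0 * Q * P0)).IsPositive := by
  have hRsa : IsSelfAdjoint (1 - P0) := by
    simp [IsSelfAdjoint, star_sub, hP0sa.star_eq]
  constructor
  · have h := hpos.conj_adjoint (1 - P0)
    rw [hRsa.adjoint_eq] at h
    have key : (1 - P0) ∘L ((Q + P0) ∘L (1 - P0)) = (1 - P0) * Q * (1 - P0) := by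
      show (1 - P0) * ((Q + P0) * (1 - P0)) = _
      have h2 : (1 - P0) * P0 * (1 - P0) = 0 := by
        rw [sub_mul, one_mul, hP0.eq, sub_self, zero_mul]
      calc (1 - P0) * ((Q + P0) * (1 - P0))
          = (1 - P0) * Q * (1 - P0) + (1 - P0) * P0 * (1 - P0) := by noncomm_ring
        _ = (1 - P0) * Q * (1 - P0) := by rw [h2, add_zero]
    rwa [key] at h
  · have h := hle.conj_adjoint P0
    rw [hP0sa.adjoint_eq] at h
    have key : P0 ∘L ((1 - (Q + P0)) ∘L P0) = -(P0 * Q * P0) := by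
      show P0 * ((1 - (Q + P0)) * P0) = _
      calc P0 * ((1 - (Q + P0)) * P0)
          = P0 * P0 - P0 * Q * P0 - P0 * P0 * P0 := by noncomm_ring
        _ = -(P0 * Q * P0) := by rw [hP0.eq, hP0.eq]; abel
    rwa [key] at h
end

section
/- Define B_Λ = (1/π) ∫₀^{Λ/√(1+Λ²)} (z² − z⁴/3)/(1 − z²) dz for Λ > 0. Then B_Λ = (2/(3π)) log Λ − 5/(9π) + (2/(3π)) log 2 + O(1/Λ²) as Λ → ∞. -/
/-!
Since `(z² - z⁴/3)/(1 - z²) = z²/3 - 2/3 + (2/3)/(1 - z²)`, the integral up to `a` equals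
`a³/9 - 2a/3 + (2/3) artanh a`. The upper limit `a = Λ/√(1+Λ²)` is `tanh (arsinh Λ)`, so
`π B_Λ = a³/9 - 2a/3 + (2/3) arsinh Λ`. Subtracting the claimed expansion leaves
`(a³ - 6a + 5)/9 + (2/3)(arsinh Λ - log (2Λ))`; the cubic has the factor `1 - a`, and both
`1 - a` and `arsinh Λ - log (2Λ)` are `O(1/Λ²)` because `√(1+Λ²) - Λ ≤ 1/(2Λ)`.
-/

open Filter

/-- The zero-momentum vacuum polarization constant `B_Λ`. -/
noncomputable def BLam (Λ : ℝ) : ℝ :=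
  (1 / Real.pi) * ∫ z in (0:ℝ)..(Λ / Real.sqrt (1 + Λ ^ 2)), (z ^ 2 - z ^ 4 / 3) / (1 - z ^ 2)

open Real Set Asymptotics

theorem Real.hasDerivAt_artanh {x : ℝ} (hx : x ∈ Ioo (-1) 1) :
    HasDerivAt artanh (1 - x ^ 2)⁻¹ x := by
  have h₁ : 0 < 1 + x := by linarith [hx.1]
  have h₂ : 0 < 1 - x := by linarith [hx.2]
  have hden : 1 - x ^ 2 ≠ 0 := by nlinarith
  have hlog : HasDerivAt (fun y => (log (1 + y) - log (1 - y)) / 2) (1 - x ^ 2)⁻¹ x := by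
    refine (((((hasDerivAt_id x).const_add 1).log h₁.ne').sub
      (((hasDerivAt_id x).const_sub 1).log h₂.ne')).div_const 2).congr_deriv ?_
    simp only [id]
    field_simp
    ring
  refine hlog.congr_of_eventuallyEq ?_
  filter_upwards [isOpen_Ioo.mem_nhds hx] with y hy
  rw [artanh_eq_half_log (Ioo_subset_Icc_self hy),
    log_div (by linarith [hy.1]) (by linarith [hy.2])]
  ring

theorem integral_sq_sub_pow_four_div_three_div_one_sub_sq {a : ℝ} (ha : a ∈ Ioo (-1) 1) :
    ∫ z in (0:ℝ)..a, (z ^ 2 - z ^ 4 / 3) / (1 - z ^ 2)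
      = a ^ 3 / 9 - 2 * a / 3 + 2 / 3 * artanh a := by
  have hsub : uIcc 0 a ⊆ Ioo (-1) 1 := ordConnected_Ioo.uIcc_subset (by norm_num) ha
  have hden : ∀ z ∈ Ioo (-1 : ℝ) 1, 1 - z ^ 2 ≠ 0 := fun z hz => by nlinarith [hz.1, hz.2]
  have hderiv : ∀ z ∈ uIcc 0 a, HasDerivAt (fun z => z ^ 3 / 9 - 2 * z / 3 + 2 / 3 * artanh z)
      ((z ^ 2 - z ^ 4 / 3) / (1 - z ^ 2)) z := fun z hz => by
    refine ((((hasDerivAt_pow 3 z).div_const 9).sub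
      (((hasDerivAt_id z).const_mul 2).div_const 3)).add
      ((hasDerivAt_artanh (hsub hz)).const_mul (2 / 3))).congr_deriv ?_
    field_simp [hden z (hsub hz)]
    ring
  have hcont : ContinuousOn (fun z : ℝ => (z ^ 2 - z ^ 4 / 3) / (1 - z ^ 2)) (uIcc 0 a) :=
    (by fun_prop : Continuous fun z : ℝ => z ^ 2 - z ^ 4 / 3).continuousOn.div (by fun_prop)
      fun z hz => hden z (hsub hz)
  rw [intervalIntegral.integral_eq_sub_of_hasDerivAt hderiv hcont.intervalIntegrable]
  simp [artanh_zero]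

theorem BLam_eq (Λ : ℝ) :
    BLam Λ = (1 / π) * ((Λ / √(1 + Λ ^ 2)) ^ 3 / 9 - 2 * (Λ / √(1 + Λ ^ 2)) / 3
      + 2 / 3 * arsinh Λ) := by
  rw [BLam, ← tanh_arsinh, integral_sq_sub_pow_four_div_three_div_one_sub_sq, artanh_tanh]
  exact ⟨neg_one_lt_tanh _, tanh_lt_one _⟩

theorem self_lt_sqrt_one_add_sq (x : ℝ) : x < √(1 + x ^ 2) :=
  (le_abs_self x).trans_lt (lt_sqrt (abs_nonneg x) |>.mpr (by rw [sq_abs]; linarith))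

theorem abs_div_sqrt_one_add_sq_le_one (x : ℝ) : |x / √(1 + x ^ 2)| ≤ 1 := by
  rw [← tanh_arsinh]
  exact abs_le.mpr ⟨(neg_one_lt_tanh _).le, (tanh_lt_one _).le⟩

theorem sqrt_one_add_sq_sub_self_le {x : ℝ} (hx : 0 < x) : √(1 + x ^ 2) - x ≤ (2 * x)⁻¹ := by
  have hs : √(1 + x ^ 2) ^ 2 = 1 + x ^ 2 := sq_sqrt (by positivity)
  have hlt := self_lt_sqrt_one_add_sq x
  rw [← one_div, le_div_iff₀ (by positivity)]
  nlinarith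

theorem one_sub_div_sqrt_one_add_sq_isBigO_inv_sq :
    (fun x => 1 - x / √(1 + x ^ 2)) =O[atTop] fun x => 1 / x ^ 2 := by
  refine IsBigO.of_bound (1 / 2) ?_
  filter_upwards [eventually_gt_atTop 0] with x hx
  have hlt := self_lt_sqrt_one_add_sq x
  have hs : 0 < √(1 + x ^ 2) := hx.trans hlt
  rw [norm_of_nonneg (sub_nonneg.mpr ((div_le_one hs).mpr hlt.le)), norm_of_nonneg (by positivity)]
  calc 1 - x / √(1 + x ^ 2) = (√(1 + x ^ 2) - x) / √(1 + x ^ 2) := by field_simp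
    _ ≤ (2 * x)⁻¹ / x := by gcongr; exact sqrt_one_add_sq_sub_self_le hx
    _ = 1 / 2 * (1 / x ^ 2) := by field_simp

theorem arsinh_sub_log_two_mul_isBigO_inv_sq :
    (fun x => arsinh x - log (2 * x)) =O[atTop] fun x => 1 / x ^ 2 := by
  refine IsBigO.of_bound (1 / 4) ?_
  filter_upwards [eventually_gt_atTop 0] with x hx
  have hlt := self_lt_sqrt_one_add_sq x
  have hratio : 1 ≤ (x + √(1 + x ^ 2)) / (2 * x) := by
    rw [le_div_iff₀ (by positivity)]; linarith
  have heq : arsinh x - log (2 * x) = log ((x + √(1 + x ^ 2)) / (2 * x)) := by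
    rw [arsinh, log_div (by positivity) (by positivity)]
  rw [heq, norm_of_nonneg (log_nonneg hratio), norm_of_nonneg (by positivity)]
  calc log ((x + √(1 + x ^ 2)) / (2 * x)) ≤ (x + √(1 + x ^ 2)) / (2 * x) - 1 :=
        log_le_sub_one_of_pos (by positivity)
    _ = (√(1 + x ^ 2) - x) / (2 * x) := by field_simp; ring
    _ ≤ (2 * x)⁻¹ / (2 * x) := by gcongr; exact sqrt_one_add_sq_sub_self_le hx
    _ = 1 / 4 * (1 / x ^ 2) := by field_simp; ring

theorem abs_cube_sub_six_mul_add_five_le {a : ℝ} (ha : |a| ≤ 1) :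
    |a ^ 3 - 6 * a + 5| ≤ 7 * |1 - a| := by
  rw [show a ^ 3 - 6 * a + 5 = (1 - a) * (5 - a - a ^ 2) by ring, abs_mul, mul_comm]
  gcongr
  rw [abs_le] at ha ⊢
  constructor <;> nlinarith

theorem stmt_5 :
    (fun Λ : ℝ => BLam Λ -
        ((2 / (3 * Real.pi)) * Real.log Λ - 5 / (9 * Real.pi)
          + (2 / (3 * Real.pi)) * Real.log 2))
      =O[atTop] fun Λ : ℝ => 1 / Λ ^ 2 := by
  have hcubic : (fun Λ : ℝ => (Λ / √(1 + Λ ^ 2)) ^ 3 - 6 * (Λ / √(1 + Λ ^ 2)) + 5)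
      =O[atTop] fun Λ => 1 / Λ ^ 2 :=
    (IsBigO.of_bound 7 (Eventually.of_forall fun Λ =>
      abs_cube_sub_six_mul_add_five_le (abs_div_sqrt_one_add_sq_le_one Λ))).trans
      one_sub_div_sqrt_one_add_sq_isBigO_inv_sq
  refine (((hcubic.const_mul_left (1 / 9)).add
    (arsinh_sub_log_two_mul_isBigO_inv_sq.const_mul_left (2 / 3))).const_mul_left (1 / π)).congr'
    ?_ EventuallyEq.rfl
  filter_upwards [eventually_gt_atTop 0] with Λ hΛ
  rw [BLam_eq, log_mul two_ne_zero hΛ.ne']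
  ring
end

section
/- Let 0 ≤ α < 4/π and suppose F(Q) ≥ (1 − απ/4) tr_{P⁰}(D⁰Q) ≥ 0 for all Q in the variational set 𝒮_Λ (where tr_{P⁰}(D⁰Q) = tr(|D⁰|Q⁺⁺) − tr(|D⁰|Q⁻⁻) ≥ 0). Then the BDF energy 𝓔(Q) = F(Q) − α D(ρ_Q, n) + (α/2) D(ρ_Q, ρ_Q) satisfies 𝓔(Q) + (α/2) D(n, n) ≥ 0 for all Q ∈ 𝒮_Λ; in particular 𝓔 is bounded below on 𝒮_Λ by −(α/2) D(n,n). -/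
open Real

/- The Coulomb pairing is an inner product, so the Coulomb part of the energy together with
`(α/2) D(n, n)` completes to the square `(α/2) D(ρ_Q - n, ρ_Q - n) ≥ 0`; the kinetic part `F(Q)` is
nonnegative because it dominates `(1 - απ/4) tr_{P⁰}(D⁰Q)`, a product of two nonnegative factors. -/

lemma one_sub_mul_pi_div_four_nonneg {α : ℝ} (hα : α < 4 / π) : 0 ≤ 1 - α * π / 4 := by
  have hαπ : α * π < 4 := (lt_div_iff₀ pi_pos).mp hα
  linarith

lemma coulomb_energy_add_self_eq_half_mul_norm_sub_sq {C : Type*} [NormedAddCommGroup C]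
    [InnerProductSpace ℝ C] (α : ℝ) (x y : C) :
    -(α * inner ℝ x y) + α / 2 * inner ℝ x x + α / 2 * inner ℝ y y = α / 2 * ‖x - y‖ ^ 2 := by
  rw [norm_sub_sq_real, real_inner_self_eq_norm_sq, real_inner_self_eq_norm_sq]
  ring

theorem stmt_14 {S : Type*} {C : Type*} [NormedAddCommGroup C] [InnerProductSpace ℝ C]
    (α : ℝ) (hα0 : 0 ≤ α) (hα : α < 4 / π)
    (F : S → ℝ) (trD : S → ℝ) (ρ : S → C) (n : C)
    (htrD : ∀ Q : S, 0 ≤ trD Q)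
    (hF : ∀ Q : S, (1 - α * π / 4) * trD Q ≤ F Q) :
    ∀ Q : S,
      0 ≤ (F Q - α * (inner ℝ (ρ Q) n : ℝ) + (α / 2) * (inner ℝ (ρ Q) (ρ Q) : ℝ))
            + (α / 2) * (inner ℝ n n : ℝ) := by
  intro Q
  have hF_nonneg : 0 ≤ F Q :=
    (mul_nonneg (one_sub_mul_pi_div_four_nonneg hα) (htrD Q)).trans (hF Q)
  have hsquare := coulomb_energy_add_self_eq_half_mul_norm_sub_sq α (ρ Q) n
  have hsquare_nonneg : 0 ≤ α / 2 * ‖ρ Q - n‖ ^ 2 := by positivity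
  linarith
end
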